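/- arXiv:math/0412403 — 3 statements merged into one kernel-verified Lean document; each statement's English description precedes it below -/
import Mathlib

section
/- Existence and uniqueness for the backward delay integro-differential equation: let T > 0, r > 0, a₀ ∈ ℝ, γ ∈ ℝ, and a₁ ∈ L²([−r,0];ℝ). Then there exists a unique continuous function w₀ : [0,T] → ℝ such that for every t ∈ [0,T], w₀(t) = γ + ∫_t^T ( a₀·w₀(s) + ∫_{−r}^{0} a₁(ξ)·w₀(s−ξ)·𝟙_{{s−ξ ≤ T}} dξ ) ds. -/
/-!
At time `s` the right-hand side only involves `w₀` on `[s, T]`: the delay variable satisfies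
`ξ ≤ 0`, and the indicator cuts everything beyond `T`. Hence the Picard map `Φ` of the equation
on `C([0, T])` obeys `|Φ x - Φ y| (t) ≤ K ∫ₜᵀ sup_{[s, T]} |x - y| ds` with
`K = |a₀| + ‖a₁‖_{L¹}` (finite, since `L² ⊆ L¹` on a bounded interval). Iterating gives
`‖Φⁿ x - Φⁿ y‖ ≤ (K T)ⁿ / n! ‖x - y‖`, so some iterate of `Φ` is a contraction and `Φ` has a
unique fixed point; the continuous solutions on `[0, T]` are exactly the fixed points of `Φ`.
-/

open MeasureTheory Set intervalIntegral
open scoped Nat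

theorem integral_sub_pow_div_factorial (t T : ℝ) (n : ℕ) :
    ∫ s in t..T, (T - s) ^ n / n ! = (T - t) ^ (n + 1) / (n + 1)! := by
  rw [intervalIntegral.integral_div, intervalIntegral.integral_comp_sub_left (fun u => u ^ n),
    sub_self, integral_pow, Nat.factorial_succ]
  push_cast
  field_simp
  ring

/-- Antitone majorants `B` of `x - y` encode that `Φ x t` depends on `x` only through its
values on `[t, T]`. -/
def IsBackwardVolterra {T : ℝ} (K : ℝ) (Φ : C(Icc (0 : ℝ) T, ℝ) → C(Icc (0 : ℝ) T, ℝ)) : Prop :=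
  ∀ x y (B : ℝ → ℝ), AntitoneOn B (Icc 0 T) → (∀ u : Icc (0 : ℝ) T, |x u - y u| ≤ B u) →
    ∀ t : Icc (0 : ℝ) T, |Φ x t - Φ y t| ≤ K * ∫ s in (t : ℝ)..T, B s

namespace IsBackwardVolterra

variable {T K : ℝ} {Φ : C(Icc (0 : ℝ) T, ℝ) → C(Icc (0 : ℝ) T, ℝ)}

theorem abs_iterate_sub_le (hΦ : IsBackwardVolterra K Φ) (hK : 0 ≤ K)
    (x y : C(Icc (0 : ℝ) T, ℝ)) (n : ℕ) (t : Icc (0 : ℝ) T) :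
    |Φ^[n] x t - Φ^[n] y t| ≤ K ^ n * dist x y * ((T - t) ^ n / n !) := by
  induction n generalizing t with
  | zero => simpa [← Real.dist_eq] using ContinuousMap.dist_apply_le_dist t
  | succ n ih =>
    have hB : AntitoneOn (fun s => K ^ n * dist x y * ((T - s) ^ n / n !)) (Icc 0 T) := by
      intro s _ u hu hsu
      have : (T - u) ^ n ≤ (T - s) ^ n := by gcongr; linarith [hu.2]
      dsimp only
      gcongr
    rw [Function.iterate_succ_apply', Function.iterate_succ_apply']
    calc |Φ (Φ^[n] x) t - Φ (Φ^[n] y) t|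
        ≤ K * ∫ s in (t : ℝ)..T, K ^ n * dist x y * ((T - s) ^ n / n !) := hΦ _ _ _ hB ih t
      _ = K ^ (n + 1) * dist x y * ((T - t) ^ (n + 1) / (n + 1)!) := by
        rw [intervalIntegral.integral_const_mul, integral_sub_pow_div_factorial]
        ring

theorem dist_iterate_le (hΦ : IsBackwardVolterra K Φ) (hK : 0 ≤ K) (hT : 0 ≤ T)
    (x y : C(Icc (0 : ℝ) T, ℝ)) (n : ℕ) :
    dist (Φ^[n] x) (Φ^[n] y) ≤ (K * T) ^ n / n ! * dist x y := by
  refine (ContinuousMap.dist_le (by positivity)).2 fun t => ?_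
  have hTt : (T - t) ^ n ≤ T ^ n := by gcongr <;> linarith [t.2.1, t.2.2]
  calc dist (Φ^[n] x t) (Φ^[n] y t) ≤ K ^ n * dist x y * ((T - t) ^ n / n !) :=
        (Real.dist_eq _ _).trans_le (hΦ.abs_iterate_sub_le hK x y n t)
    _ ≤ K ^ n * dist x y * (T ^ n / n !) := by gcongr
    _ = (K * T) ^ n / n ! * dist x y := by ring

theorem existsUnique_fixedPoint (hΦ : IsBackwardVolterra K Φ) (hK : 0 ≤ K) (hT : 0 ≤ T) :
    ∃! x, Φ x = x := by
  obtain ⟨n, hn⟩ : ∃ n : ℕ, (K * T) ^ n / n ! < 1 :=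
    ((FloorSemiring.tendsto_pow_div_factorial_atTop (K * T)).eventually
      (gt_mem_nhds one_pos)).exists
  have hq : 0 ≤ (K * T) ^ n / n ! := by positivity
  have hcontr : ContractingWith ((K * T) ^ n / n !).toNNReal Φ^[n] :=
    ⟨by rwa [← NNReal.coe_lt_coe, Real.coe_toNNReal _ hq],
      LipschitzWith.of_dist_le_mul fun x y => by
        rw [Real.coe_toNNReal _ hq]
        exact hΦ.dist_iterate_le hK hT x y n⟩
  exact ⟨_, hcontr.isFixedPt_fixedPoint_iterate, fun y hy =>
    hcontr.fixedPoint_unique' (Function.IsFixedPt.iterate hy n)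
      (hcontr.isFixedPt_fixedPoint_iterate.iterate n)⟩

end IsBackwardVolterra

noncomputable def delayRHS (T r a₀ : ℝ) (a₁ w : ℝ → ℝ) (s : ℝ) : ℝ :=
  a₀ * w s + ∫ ξ in Icc (-r) 0, a₁ ξ * w (s - ξ) * (if s - ξ ≤ T then (1 : ℝ) else 0)

section delayRHS

variable {T r a₀ : ℝ} {a₁ w v : ℝ → ℝ}

theorem integrableOn_delayRHS_integrand (ha : IntegrableOn a₁ (Icc (-r) 0)) (hw : Continuous w)
    (s : ℝ) :
    IntegrableOn (fun ξ => a₁ ξ * w (s - ξ) * (if s - ξ ≤ T then (1 : ℝ) else 0)) (Icc (-r) 0) :=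
  (ha.mul_continuousOn (by fun_prop) isCompact_Icc).mul_bdd
    ((measurable_const.ite (measurableSet_le (by fun_prop) measurable_const)
      measurable_const).aestronglyMeasurable)
    (c := 1) (ae_of_all _ fun ξ => by split_ifs <;> simp)

theorem delayRHS_congr {s : ℝ} (hs : s ≤ T) (h : EqOn w v (Icc s T)) :
    delayRHS T r a₀ a₁ w s = delayRHS T r a₀ a₁ v s := by
  have hkernel : EqOn (fun ξ => a₁ ξ * w (s - ξ) * (if s - ξ ≤ T then (1 : ℝ) else 0))
      (fun ξ => a₁ ξ * v (s - ξ) * (if s - ξ ≤ T then (1 : ℝ) else 0)) (Icc (-r) 0) := by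
    intro ξ hξ
    by_cases hξT : s - ξ ≤ T
    · simp only [hξT, h ⟨by linarith [hξ.2], hξT⟩]
    · simp [hξT]
  rw [delayRHS, delayRHS, h ⟨le_rfl, hs⟩, setIntegral_congr_fun measurableSet_Icc hkernel]

theorem delayRHS_sub (ha : IntegrableOn a₁ (Icc (-r) 0)) (hw : Continuous w) (hv : Continuous v)
    (s : ℝ) :
    delayRHS T r a₀ a₁ w s - delayRHS T r a₀ a₁ v s = delayRHS T r a₀ a₁ (w - v) s := by
  simp only [delayRHS, Pi.sub_apply]
  rw [add_sub_add_comm, ← mul_sub, ← integral_sub (integrableOn_delayRHS_integrand ha hw s)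
    (integrableOn_delayRHS_integrand ha hv s)]
  simp only [mul_sub, sub_mul]

theorem abs_delayRHS_le (ha : IntegrableOn a₁ (Icc (-r) 0)) (hw : Continuous w) {s B : ℝ}
    (hB : ∀ u ∈ Ici s, |w u| ≤ B) :
    |delayRHS T r a₀ a₁ w s| ≤ (|a₀| + ∫ ξ in Icc (-r) 0, |a₁ ξ|) * B := by
  have hB0 : 0 ≤ B := (abs_nonneg _).trans (hB s self_mem_Ici)
  have hkernel : ∀ ξ ∈ Icc (-r) 0,
      |a₁ ξ * w (s - ξ) * (if s - ξ ≤ T then (1 : ℝ) else 0)| ≤ |a₁ ξ| * B := fun ξ hξ => by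
    rw [abs_mul, abs_mul]
    split_ifs
    · simpa using mul_le_mul_of_nonneg_left (hB _ (by simp [hξ.2])) (abs_nonneg (a₁ ξ))
    · simpa using mul_nonneg (abs_nonneg (a₁ ξ)) hB0
  calc |delayRHS T r a₀ a₁ w s|
      ≤ |a₀| * |w s| + ∫ ξ in Icc (-r) 0,
          |a₁ ξ * w (s - ξ) * (if s - ξ ≤ T then (1 : ℝ) else 0)| :=
        (abs_add_le _ _).trans (by rw [abs_mul]; gcongr; exact abs_integral_le_integral_abs)
    _ ≤ |a₀| * B + ∫ ξ in Icc (-r) 0, |a₁ ξ| * B :=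
        add_le_add (by gcongr; exact hB s self_mem_Ici) (setIntegral_mono_on
          (integrableOn_delayRHS_integrand ha hw s).abs (ha.abs.mul_const B) measurableSet_Icc
          hkernel)
    _ = (|a₀| + ∫ ξ in Icc (-r) 0, |a₁ ξ|) * B := by
        rw [MeasureTheory.integral_mul_const, add_mul]

theorem aestronglyMeasurable_delayRHS
    (ha : AEStronglyMeasurable a₁ (volume.restrict (Icc (-r) 0))) (hw : Continuous w) :
    AEStronglyMeasurable (delayRHS T r a₀ a₁ w) := by
  refine (continuous_const.mul hw).aestronglyMeasurable.add ?_
  refine AEStronglyMeasurable.integral_prod_right' (f := fun p : ℝ × ℝ =>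
    a₁ p.2 * w (p.1 - p.2) * (if p.1 - p.2 ≤ T then (1 : ℝ) else 0)) ?_
  refine (((ha.aemeasurable.comp_snd).mul ?_).mul ?_).aestronglyMeasurable
  · exact (hw.comp (continuous_fst.sub continuous_snd)).measurable.aemeasurable
  · exact (measurable_const.ite (measurableSet_le (by fun_prop) measurable_const)
      measurable_const).aemeasurable

theorem intervalIntegrable_delayRHS (ha : IntegrableOn a₁ (Icc (-r) 0)) (hw : Continuous w)
    {M : ℝ} (hM : ∀ u, |w u| ≤ M) (a b : ℝ) :
    IntervalIntegrable (delayRHS T r a₀ a₁ w) volume a b :=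
  (intervalIntegrable_const (c := (|a₀| + ∫ ξ in Icc (-r) 0, |a₁ ξ|) * M)).mono_fun'
    (aestronglyMeasurable_delayRHS ha.aestronglyMeasurable hw).restrict
    (ae_of_all _ fun _ => abs_delayRHS_le ha hw fun u _ => hM u)

end delayRHS

theorem abs_IccExtend_le {a b : ℝ} (hab : a ≤ b) (x : C(Icc a b, ℝ)) (u : ℝ) :
    |IccExtend hab x u| ≤ ‖x‖ :=
  x.norm_coe_le_norm _

section delayPicard

variable {T r a₀ γ : ℝ} {a₁ : ℝ → ℝ}

noncomputable def delayPicard (hT : 0 ≤ T) (r a₀ γ : ℝ) (a₁ : ℝ → ℝ)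
    (ha : IntegrableOn a₁ (Icc (-r) 0)) (x : C(Icc (0 : ℝ) T, ℝ)) : C(Icc (0 : ℝ) T, ℝ) where
  toFun t := γ + ∫ s in (t : ℝ)..T, delayRHS T r a₀ a₁ (IccExtend hT x) s
  continuous_toFun := by
    have hint := intervalIntegrable_delayRHS (T := T) (a₀ := a₀) ha x.continuous.Icc_extend'
      (abs_IccExtend_le hT x)
    simp_rw [integral_symm T]
    exact continuous_const.add ((continuous_primitive hint T).neg.comp continuous_subtype_val)

theorem delayPicard_apply_of_eqOn (hT : 0 ≤ T) (ha : IntegrableOn a₁ (Icc (-r) 0))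
    {x : C(Icc (0 : ℝ) T, ℝ)} {w : ℝ → ℝ} (hxw : EqOn (IccExtend hT x) w (Icc 0 T))
    (t : Icc (0 : ℝ) T) :
    delayPicard hT r a₀ γ a₁ ha x t = γ + ∫ s in (t : ℝ)..T, delayRHS T r a₀ a₁ w s := by
  refine congrArg (γ + ·) (integral_congr fun s hs => delayRHS_congr ?_ (hxw.mono ?_))
  all_goals rw [uIcc_of_le t.2.2] at hs
  · exact hs.2
  · exact Icc_subset_Icc (t.2.1.trans hs.1) le_rfl

theorem isBackwardVolterra_delayPicard (hT : 0 ≤ T) (ha : IntegrableOn a₁ (Icc (-r) 0)) :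
    IsBackwardVolterra (|a₀| + ∫ ξ in Icc (-r) 0, |a₁ ξ|) (delayPicard hT r a₀ γ a₁ ha) := by
  intro x y B hB hxy t
  have hx := x.continuous.Icc_extend' (h := hT)
  have hy := y.continuous.Icc_extend' (h := hT)
  have hint (z : C(Icc (0 : ℝ) T, ℝ)) := intervalIntegrable_delayRHS (T := T) (a₀ := a₀) ha
    z.continuous.Icc_extend' (abs_IccExtend_le hT z) t T
  have hBt : AntitoneOn B (uIcc t T) := hB.mono (by
    rw [uIcc_of_le t.2.2]; exact Icc_subset_Icc t.2.1 le_rfl)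
  have hpt : ∀ s ∈ Icc (t : ℝ) T, |delayRHS T r a₀ a₁ (IccExtend hT x - IccExtend hT y) s|
      ≤ (|a₀| + ∫ ξ in Icc (-r) 0, |a₁ ξ|) * B s := fun s hs =>
    abs_delayRHS_le ha (hx.sub hy) fun u hu => by
      have hs0 : s ∈ Icc 0 T := ⟨t.2.1.trans hs.1, hs.2⟩
      have hsu : projIcc 0 T hT s ≤ projIcc 0 T hT u := monotone_projIcc hT hu
      rw [projIcc_of_mem hT hs0] at hsu
      exact (hxy _).trans (hB hs0 (projIcc 0 T hT u).2 hsu)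
  calc |delayPicard hT r a₀ γ a₁ ha x t - delayPicard hT r a₀ γ a₁ ha y t|
      = |∫ s in (t : ℝ)..T, delayRHS T r a₀ a₁ (IccExtend hT x - IccExtend hT y) s| := by
        simp only [delayPicard, ContinuousMap.coe_mk]
        rw [add_sub_add_left_eq_sub, ← integral_sub (hint x) (hint y)]
        simp_rw [delayRHS_sub ha hx hy]
    _ ≤ ∫ s in (t : ℝ)..T, |delayRHS T r a₀ a₁ (IccExtend hT x - IccExtend hT y) s| :=
        abs_integral_le_integral_abs t.2.2
    _ ≤ ∫ s in (t : ℝ)..T, (|a₀| + ∫ ξ in Icc (-r) 0, |a₁ ξ|) * B s :=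
        integral_mono_on t.2.2
          (by simpa only [delayRHS_sub ha hx hy] using ((hint x).sub (hint y)).abs)
          (hBt.intervalIntegrable.const_mul _) hpt
    _ = _ := intervalIntegral.integral_const_mul _ _

theorem delayPicard_restrict_eq_self (hT : 0 ≤ T) (ha : IntegrableOn a₁ (Icc (-r) 0))
    {w : ℝ → ℝ} (hc : ContinuousOn w (Icc 0 T))
    (hw : ∀ t ∈ Icc (0 : ℝ) T, w t = γ + ∫ s in t..T, delayRHS T r a₀ a₁ w s) :
    delayPicard hT r a₀ γ a₁ ha ⟨(Icc 0 T).domRestrict w, hc.domRestrict⟩ =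
      ⟨(Icc 0 T).domRestrict w, hc.domRestrict⟩ :=
  ContinuousMap.ext fun t => (delayPicard_apply_of_eqOn hT ha
    (fun u hu => by rw [IccExtend_of_mem _ _ hu]; rfl) t).trans (hw t t.2).symm

end delayPicard

theorem backward_delay_equation_exists_unique_general (T r a₀ γ : ℝ) (hT : 0 < T)
    (a₁ : ℝ → ℝ) (ha : MemLp a₁ 2 (volume.restrict (Set.Icc (-r) 0))) :
    (∃ w₀ : ℝ → ℝ, ContinuousOn w₀ (Set.Icc 0 T) ∧ ∀ t ∈ Set.Icc (0 : ℝ) T,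
        w₀ t = γ + ∫ s in t..T, (a₀ * w₀ s +
          ∫ ξ in Set.Icc (-r) 0, a₁ ξ * w₀ (s - ξ) * (if s - ξ ≤ T then (1 : ℝ) else 0))) ∧
    ∀ w₀ w₀' : ℝ → ℝ, ContinuousOn w₀ (Set.Icc 0 T) → ContinuousOn w₀' (Set.Icc 0 T) →
      (∀ t ∈ Set.Icc (0 : ℝ) T,
        w₀ t = γ + ∫ s in t..T, (a₀ * w₀ s +
          ∫ ξ in Set.Icc (-r) 0, a₁ ξ * w₀ (s - ξ) * (if s - ξ ≤ T then (1 : ℝ) else 0))) →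
      (∀ t ∈ Set.Icc (0 : ℝ) T,
        w₀' t = γ + ∫ s in t..T, (a₀ * w₀' s +
          ∫ ξ in Set.Icc (-r) 0, a₁ ξ * w₀' (s - ξ) * (if s - ξ ≤ T then (1 : ℝ) else 0))) →
      ∀ t ∈ Set.Icc (0 : ℝ) T, w₀ t = w₀' t := by
  have : IsFiniteMeasure (volume.restrict (Icc (-r) 0)) :=
    isFiniteMeasure_restrict.2 measure_Icc_lt_top.ne
  have ha' : IntegrableOn a₁ (Icc (-r) 0) := ha.integrable one_le_two
  obtain ⟨x, hx, hx_unique⟩ := (isBackwardVolterra_delayPicard (a₀ := a₀) (γ := γ) hT.le ha')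
    |>.existsUnique_fixedPoint (by positivity) hT.le
  refine ⟨⟨IccExtend hT.le x, x.continuous.Icc_extend'.continuousOn, fun t ht => ?_⟩,
    fun w w' hc hc' hw hw' t ht => ?_⟩
  · rw [IccExtend_of_mem _ _ ht]
    exact (DFunLike.congr_fun hx ⟨t, ht⟩).symm.trans
      (delayPicard_apply_of_eqOn hT.le ha' (eqOn_refl _ _) _)
  · have hxw := hx_unique _ (delayPicard_restrict_eq_self hT.le ha' hc hw)
    have hxw' := hx_unique _ (delayPicard_restrict_eq_self hT.le ha' hc' hw')
    exact congrArg (· ⟨t, ht⟩) (hxw.trans hxw'.symm)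

/-- Existence and uniqueness for the backward delay integro-differential equation:
there is a continuous function `w₀` on `[0,T]`, unique as a function on `[0,T]`, with
`w₀(t) = γ + ∫_t^T ( a₀·w₀(s) + ∫_{−r}^{0} a₁(ξ)·w₀(s−ξ)·𝟙_{s−ξ ≤ T} dξ ) ds`
for every `t ∈ [0,T]`. -/
theorem backward_delay_equation_exists_unique (T r a₀ γ : ℝ) (hT : 0 < T) (hr : 0 < r)
    (a₁ : ℝ → ℝ) (ha : MemLp a₁ 2 (volume.restrict (Set.Icc (-r) 0))) :
    (∃ w₀ : ℝ → ℝ, ContinuousOn w₀ (Set.Icc 0 T) ∧ ∀ t ∈ Set.Icc (0 : ℝ) T,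
        w₀ t = γ + ∫ s in t..T, (a₀ * w₀ s +
          ∫ ξ in Set.Icc (-r) 0, a₁ ξ * w₀ (s - ξ) * (if s - ξ ≤ T then (1 : ℝ) else 0))) ∧
    ∀ w₀ w₀' : ℝ → ℝ, ContinuousOn w₀ (Set.Icc 0 T) → ContinuousOn w₀' (Set.Icc 0 T) →
      (∀ t ∈ Set.Icc (0 : ℝ) T,
        w₀ t = γ + ∫ s in t..T, (a₀ * w₀ s +
          ∫ ξ in Set.Icc (-r) 0, a₁ ξ * w₀ (s - ξ) * (if s - ξ ≤ T then (1 : ℝ) else 0))) →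
      (∀ t ∈ Set.Icc (0 : ℝ) T,
        w₀' t = γ + ∫ s in t..T, (a₀ * w₀' s +
          ∫ ξ in Set.Icc (-r) 0, a₁ ξ * w₀' (s - ξ) * (if s - ξ ≤ T then (1 : ℝ) else 0))) →
      ∀ t ∈ Set.Icc (0 : ℝ) T, w₀ t = w₀' t :=
  backward_delay_equation_exists_unique_general T r a₀ γ hT a₁ ha
end

section
/- The affine function v(t,x) = ⟨w(t),x⟩ + c(t) is an integral solution of the HJB equation for the linear-quadratic example: let T > 0, r > 0, a₀, b₀, γ ∈ ℝ, β > 0, a₁, b₁ ∈ L²([−r,0];ℝ). Let w₀ : [0,T] → ℝ be continuous with w₀(t) = γ + ∫_t^T ( a₀w₀(s) + ∫_{−r}^{0} a₁(ξ)w₀(s−ξ)𝟙_{{s−ξ≤T}} dξ ) ds for all t, set w₁(t,ξ) = w₀(t−ξ)·𝟙_{{t−ξ ∈ [0,T]}}, b(s) = b₀w₀(s) + ∫_{−r}^0 b₁(ξ)w₁(s,ξ)dξ, and c(t) = ∫_t^T (max(b(s),0))²/(4β) ds. Then for every t ∈ [0,T], every x₀ ∈ ℝ and every g ∈ L²([−r,0];ℝ),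 setting x₁(ξ) = ∫_{−r}^{ξ} g(ζ)dζ, the following identity holds: γ·x₀ − ( w₀(t)·x₀ + ∫_{−r}^0 w₁(t,ξ)·x₁(ξ)dξ + c(t) ) + ∫_t^T [ (a₀x₀ + x₁(0))·w₀(s) + ∫_{−r}^0 (a₁(ξ)x₀ − g(ξ))·w₁(s,ξ)dξ + (max(b(s),0))²/(4β) ] ds = 0. -/
/-!
Let `W` be the extension of `w₀` by zero outside `[0,T]`, so that `w₁ s ξ = W (s - ξ)`. The
integrand splits as `x₀` times the integrand of the delay equation for `w₀`, which integrates to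
`w₀ t - γ`; plus `x₁ 0 * W s - ∫ g ζ * W (s - ζ) dζ`; plus the Hamiltonian term, which integrates
to `c t`. By Fubini, both the integral over `[t,T]` of the middle term and the pairing
`∫ W (t - ξ) * x₁ ξ dξ` equal `∫ g ζ * ∫_t^{t-ζ} W dζ`; for the former this uses that `W`
vanishes beyond `T`, for the latter that `x₁` is a primitive of `g`.
-/

open MeasureTheory Set intervalIntegral

lemma ContinuousOn.measurable_indicator {α γ : Type*} [TopologicalSpace α] [MeasurableSpace α]
    [OpensMeasurableSpace α] [TopologicalSpace γ] [MeasurableSpace γ] [BorelSpace γ] [Zero γ]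
    {f : α → γ} {s : Set α} (hf : ContinuousOn f s) (hs : MeasurableSet s) :
    Measurable (s.indicator f) := by
  classical
  rw [← piecewise_eq_indicator]
  exact hf.measurable_piecewise continuousOn_const hs

lemma IsCompact.exists_norm_indicator_le {α E : Type*} [TopologicalSpace α]
    [SeminormedAddCommGroup E] {s : Set α} {f : α → E} (hs : IsCompact s)
    (hf : ContinuousOn f s) : ∃ C, ∀ x, ‖s.indicator f x‖ ≤ C := by
  obtain ⟨C, hC⟩ := hs.exists_bound_of_continuousOn hf
  refine ⟨max C 0, fun x => ?_⟩
  by_cases hx : x ∈ s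
  · simpa [indicator_of_mem hx] using le_max_of_le_left (hC x hx)
  · simp [indicator_of_notMem hx]

lemma indicator_Icc_zero_apply_of_nonneg {w : ℝ → ℝ} {T u : ℝ} (hu : 0 ≤ u) :
    (Icc 0 T).indicator w u = w u * if u ≤ T then 1 else 0 := by
  simp only [indicator_apply, mem_Icc, hu, true_and, mul_ite, mul_one, mul_zero]

lemma integral_Icc_mul_integral_Icc_comm {a b : ℝ} {f g : ℝ → ℝ}
    (hf : IntegrableOn f (Icc a b)) (hg : IntegrableOn g (Icc a b)) :
    ∫ ξ in Icc a b, f ξ * ∫ ζ in Icc a ξ, g ζ = ∫ ζ in Icc a b, g ζ * ∫ ξ in Icc ζ b, f ξ := by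
  set F : ℝ → ℝ → ℝ := fun ξ ζ => if ζ ≤ ξ then f ξ * g ζ else 0
  have hF : Integrable (Function.uncurry F)
      ((volume.restrict (Icc a b)).prod (volume.restrict (Icc a b))) :=
    (hf.mul_prod hg).indicator (measurableSet_le measurable_snd measurable_fst)
  calc ∫ ξ in Icc a b, f ξ * ∫ ζ in Icc a ξ, g ζ
      = ∫ ξ in Icc a b, ∫ ζ in Icc a b, F ξ ζ := by
        refine setIntegral_congr_fun measurableSet_Icc fun ξ hξ => ?_
        change _ = ∫ ζ in Icc a b, (Iic ξ).indicator (fun ζ => f ξ * g ζ) ζ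
        have hset : Icc a b ∩ Iic ξ = Icc a ξ := by
          ext u; simp only [mem_inter_iff, mem_Icc, mem_Iic]; grind
        rw [setIntegral_indicator measurableSet_Iic, hset, MeasureTheory.integral_const_mul]
    _ = ∫ ζ in Icc a b, ∫ ξ in Icc a b, F ξ ζ := integral_integral_swap hF
    _ = ∫ ζ in Icc a b, g ζ * ∫ ξ in Icc ζ b, f ξ := by
        refine setIntegral_congr_fun measurableSet_Icc fun ζ hζ => ?_
        change ∫ ξ in Icc a b, (Ici ζ).indicator (fun ξ => f ξ * g ζ) ξ = _
        have hset : Icc a b ∩ Ici ζ = Icc ζ b := by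
          ext u; simp only [mem_inter_iff, mem_Icc, mem_Ici]; grind
        rw [setIntegral_indicator measurableSet_Ici, hset, MeasureTheory.integral_mul_const,
          mul_comm]

section Translates

variable {W : ℝ → ℝ} {M : ℝ}

lemma integrable_mul_comp_sub {ν : Measure ℝ} {h : ℝ → ℝ} (hh : Integrable h ν)
    (hWm : Measurable W) (hWM : ∀ u, ‖W u‖ ≤ M) (x : ℝ) :
    Integrable (fun ζ => h ζ * W (x - ζ)) ν :=
  hh.mul_bdd (hWm.comp (measurable_const.sub measurable_id)).aestronglyMeasurable
    (.of_forall fun _ => hWM _)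

lemma integrable_prod_mul_comp_sub {μ ν : Measure ℝ} [IsFiniteMeasure μ] {h : ℝ → ℝ}
    (hh : Integrable h ν) (hWm : Measurable W) (hWM : ∀ u, ‖W u‖ ≤ M) :
    Integrable (fun p : ℝ × ℝ => h p.2 * W (p.1 - p.2)) (μ.prod ν) := by
  simpa only [one_mul, Function.comp_apply, Pi.sub_apply] using
    ((integrable_const (1 : ℝ)).mul_prod hh).mul_bdd
    (hWm.comp (measurable_fst.sub measurable_snd)).aestronglyMeasurable
    (.of_forall fun _ => hWM _)

lemma integrable_integral_mul_comp_sub {μ ν : Measure ℝ} [IsFiniteMeasure μ] [SFinite ν]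
    {h : ℝ → ℝ} (hh : Integrable h ν) (hWm : Measurable W) (hWM : ∀ u, ‖W u‖ ≤ M) :
    Integrable (fun s => ∫ ζ, h ζ * W (s - ζ) ∂ν) μ :=
  (integrable_prod_mul_comp_sub hh hWm hWM).integral_prod_left

lemma intervalIntegrable_integral_mul_comp_sub {ν : Measure ℝ} [SFinite ν] {h : ℝ → ℝ}
    (hh : Integrable h ν) (hWm : Measurable W) (hWM : ∀ u, ‖W u‖ ≤ M) (a b : ℝ) :
    IntervalIntegrable (fun s => ∫ ζ, h ζ * W (s - ζ) ∂ν) volume a b :=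
  ⟨integrable_integral_mul_comp_sub hh hWm hWM, integrable_integral_mul_comp_sub hh hWm hWM⟩

lemma norm_integral_mul_comp_sub_le {ν : Measure ℝ} {h : ℝ → ℝ} (hh : Integrable h ν)
    (hWM : ∀ u, ‖W u‖ ≤ M) (x : ℝ) :
    ‖∫ ζ, h ζ * W (x - ζ) ∂ν‖ ≤ M * ∫ ζ, ‖h ζ‖ ∂ν := by
  rw [← MeasureTheory.integral_const_mul]
  refine norm_integral_le_of_norm_le (hh.norm.const_mul M) (.of_forall fun ζ => ?_)
  rw [norm_mul, mul_comm]
  exact mul_le_mul_of_nonneg_right (hWM _) (norm_nonneg _)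

lemma intervalIntegrable_comp_add_integral_mul_comp_sub {ν : Measure ℝ} [SFinite ν]
    {h F : ℝ → ℝ} (hh : Integrable h ν) (hWm : Measurable W) (hWM : ∀ u, ‖W u‖ ≤ M)
    (hF : Continuous F) (c a b : ℝ) :
    IntervalIntegrable (fun s => F (c * W s + ∫ ζ, h ζ * W (s - ζ) ∂ν)) volume a b := by
  obtain ⟨K, hK⟩ := IsCompact.exists_bound_of_continuousOn
    (isCompact_closedBall (0 : ℝ) (‖c‖ * M + M * ∫ ζ, ‖h ζ‖ ∂ν)) hF.continuousOn
  have hbound (s : ℝ) : ‖F (c * W s + ∫ ζ, h ζ * W (s - ζ) ∂ν)‖ ≤ K :=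
    hK _ <| mem_closedBall_zero_iff.2 <| (norm_add_le _ _).trans
      (add_le_add (norm_mul_le_of_le le_rfl (hWM s)) (norm_integral_mul_comp_sub_le hh hWM s))
  have hint (μ : Measure ℝ) [IsFiniteMeasure μ] :
      Integrable (fun s => F (c * W s + ∫ ζ, h ζ * W (s - ζ) ∂ν)) μ :=
    (integrable_const K).mono' (hF.comp_aestronglyMeasurable <|
      (hWm.const_mul c).aestronglyMeasurable.add
        (integrable_integral_mul_comp_sub hh hWm hWM).aestronglyMeasurable) (.of_forall hbound)
  exact ⟨hint _, hint _⟩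

lemma integral_sub_integral_comp_sub {T t ζ : ℝ} (hζ : ζ ≤ 0)
    (hWi : Integrable W) (hWT : ∀ u, T < u → W u = 0) :
    (∫ s in t..T, W s) - ∫ s in t..T, W (s - ζ) = ∫ s in t..t - ζ, W s := by
  have hvanish : ∫ s in T..T - ζ, W s = 0 := by
    rw [integral_of_le (by linarith)]
    exact setIntegral_eq_zero_of_forall_eq_zero fun u hu => hWT u hu.1
  have hadd₁ := integral_add_adjacent_intervals (hWi.intervalIntegrable (a := t) (b := t - ζ))
    (hWi.intervalIntegrable (b := T))
  have hadd₂ := integral_add_adjacent_intervals (hWi.intervalIntegrable (a := t - ζ) (b := T))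
    (hWi.intervalIntegrable (b := T - ζ))
  rw [integral_comp_sub_right]
  linarith

lemma integral_mul_sub_integral_mul_comp_sub {ν : Measure ℝ} [SFinite ν] {T t : ℝ}
    (htT : t ≤ T) (hν : ∀ᵐ ζ ∂ν, ζ ≤ 0) {g : ℝ → ℝ} (hg : Integrable g ν)
    (hWm : Measurable W) (hWM : ∀ u, ‖W u‖ ≤ M) (hWi : Integrable W)
    (hWT : ∀ u, T < u → W u = 0) :
    ∫ s in t..T, ((∫ ζ, g ζ ∂ν) * W s - ∫ ζ, g ζ * W (s - ζ) ∂ν)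
      = ∫ ζ, g ζ * (∫ s in t..t - ζ, W s) ∂ν := by
  have hprod := integrable_prod_mul_comp_sub (μ := volume.restrict (Ioc t T)) hg hWm hWM
  rw [intervalIntegral.integral_sub (hWi.intervalIntegrable.const_mul _)
      (intervalIntegrable_integral_mul_comp_sub hg hWm hWM t T),
    intervalIntegral.integral_const_mul, integral_of_le htT (f := fun s => ∫ ζ, _ ∂ν),
    integral_integral_swap hprod, ← MeasureTheory.integral_mul_const,
    ← integral_sub (hg.mul_const _) hprod.integral_prod_right]
  apply MeasureTheory.integral_congr_ae
  filter_upwards [hν] with ζ hζ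
  rw [MeasureTheory.integral_const_mul, ← integral_of_le htT, ← mul_sub,
    integral_sub_integral_comp_sub hζ hWi hWT]

lemma integral_mul_integral_Icc_eq_integral_mul_integral {a t : ℝ} {g : ℝ → ℝ}
    (hg : IntegrableOn g (Icc a 0)) (hWi : Integrable W) :
    ∫ ξ in Icc a 0, W (t - ξ) * ∫ ζ in Icc a ξ, g ζ
      = ∫ ζ in Icc a 0, g ζ * ∫ s in t..t - ζ, W s := by
  rw [integral_Icc_mul_integral_Icc_comm (hWi.comp_sub_left t).integrableOn hg]
  refine setIntegral_congr_fun measurableSet_Icc fun ζ hζ => ?_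
  rw [integral_Icc_eq_integral_Ioc, ← intervalIntegral.integral_of_le hζ.2,
    intervalIntegral.integral_comp_sub_left, sub_zero]

end Translates

theorem affine_integral_solution_of_HJB_general (T r a₀ b₀ γ β : ℝ)
    (a₁ b₁ : ℝ → ℝ)
    (ha₁ : MemLp a₁ 2 (volume.restrict (Set.Icc (-r) 0)))
    (hb₁ : MemLp b₁ 2 (volume.restrict (Set.Icc (-r) 0)))
    (w₀ : ℝ → ℝ) (hw₀c : ContinuousOn w₀ (Set.Icc 0 T))
    (hw₀ : ∀ t ∈ Set.Icc (0 : ℝ) T,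
      w₀ t = γ + ∫ s in t..T, (a₀ * w₀ s +
        ∫ ξ in Set.Icc (-r) 0, a₁ ξ * w₀ (s - ξ) * (if s - ξ ≤ T then (1 : ℝ) else 0)))
    (w₁ : ℝ → ℝ → ℝ)
    (hw₁ : ∀ t ξ, w₁ t ξ = w₀ (t - ξ) * (if t - ξ ∈ Set.Icc 0 T then (1 : ℝ) else 0))
    (b : ℝ → ℝ)
    (hb : ∀ s, b s = b₀ * w₀ s + ∫ ξ in Set.Icc (-r) 0, b₁ ξ * w₁ s ξ)
    (c : ℝ → ℝ)
    (hc : ∀ t, c t = ∫ s in t..T, (max (b s) 0) ^ 2 / (4 * β))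
    (t : ℝ) (ht : t ∈ Set.Icc (0 : ℝ) T) (x₀ : ℝ) (g : ℝ → ℝ)
    (hg : MemLp g 2 (volume.restrict (Set.Icc (-r) 0)))
    (x₁ : ℝ → ℝ) (hx₁ : ∀ ξ, x₁ ξ = ∫ ζ in Set.Icc (-r) ξ, g ζ) :
    γ * x₀ - (w₀ t * x₀ + (∫ ξ in Set.Icc (-r) 0, w₁ t ξ * x₁ ξ) + c t) +
      ∫ s in t..T, ((a₀ * x₀ + x₁ 0) * w₀ s +
        (∫ ξ in Set.Icc (-r) 0, (a₁ ξ * x₀ - g ξ) * w₁ s ξ) +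
        (max (b s) 0) ^ 2 / (4 * β)) = 0 := by
  obtain ⟨h0t, htT⟩ := ht
  obtain ⟨M, hWM⟩ := isCompact_Icc.exists_norm_indicator_le hw₀c
  set W := (Icc 0 T).indicator w₀ with hW
  have hWm : Measurable W := hw₀c.measurable_indicator measurableSet_Icc
  have hWi : Integrable W := hw₀c.integrableOn_Icc.integrable_indicator measurableSet_Icc
  have hWT : ∀ u, T < u → W u = 0 := fun u hu => indicator_of_notMem (fun h => hu.not_ge h.2) _
  have hWw₀ : EqOn W w₀ (uIcc t T) := fun s hs =>
    indicator_of_mem (Icc_subset_Icc_left h0t (uIcc_of_le htT ▸ hs)) _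
  have hw₁W : ∀ s ξ, w₁ s ξ = W (s - ξ) := fun s ξ => by
    rw [hw₁, hW, indicator_apply, mul_ite, mul_one, mul_zero]
  have ha₁i := ha₁.integrable one_le_two
  have hgi := hg.integrable one_le_two
  set P := fun s => a₀ * W s + ∫ ξ in Icc (-r) 0, a₁ ξ * W (s - ξ)
  set Q := fun s => x₁ 0 * W s - ∫ ξ in Icc (-r) 0, g ξ * W (s - ξ)
  have hPi : IntervalIntegrable P volume t T := (hWi.intervalIntegrable.const_mul _).add
    (intervalIntegrable_integral_mul_comp_sub ha₁i hWm hWM t T)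
  have hQi : IntervalIntegrable Q volume t T := (hWi.intervalIntegrable.const_mul _).sub
    (intervalIntegrable_integral_mul_comp_sub hgi hWm hWM t T)
  have hP : ∫ s in t..T, P s = w₀ t - γ := by
    rw [hw₀ t ⟨h0t, htT⟩, add_sub_cancel_left]
    refine integral_congr fun s hs => ?_
    simp only [P, hWw₀ hs]
    congr 1
    refine setIntegral_congr_fun measurableSet_Icc fun ξ hξ => ?_
    rw [mul_assoc, hW, indicator_Icc_zero_apply_of_nonneg]
    linarith [hξ.2, (uIcc_of_le htT ▸ hs).1]
  have hQ : ∫ s in t..T, Q s = ∫ ξ in Icc (-r) 0, w₁ t ξ * x₁ ξ := by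
    simp only [Q]
    rw [hx₁, integral_mul_sub_integral_mul_comp_sub htT
      (ae_restrict_of_forall_mem measurableSet_Icc fun ζ hζ => hζ.2) hgi hWm hWM hWi hWT]
    simp only [hw₁W, hx₁]
    exact (integral_mul_integral_Icc_eq_integral_mul_integral hgi hWi).symm
  have hH : IntervalIntegrable (fun s => max (b s) 0 ^ 2 / (4 * β)) volume t T := by
    refine IntervalIntegrable.congr (fun s hs => ?_) <|
      intervalIntegrable_comp_add_integral_mul_comp_sub (hb₁.integrable one_le_two) hWm hWM
        (F := fun y => max y 0 ^ 2 / (4 * β)) (by fun_prop) b₀ t T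
    simp only [hb, hw₁W, hWw₀ (uIoc_subset_uIcc hs)]
  have hsplit : ∀ s ∈ uIcc t T, (a₀ * x₀ + x₁ 0) * w₀ s +
      (∫ ξ in Icc (-r) 0, (a₁ ξ * x₀ - g ξ) * w₁ s ξ) + max (b s) 0 ^ 2 / (4 * β)
      = x₀ * P s + Q s + max (b s) 0 ^ 2 / (4 * β) := fun s hs => by
    simp only [P, Q, hw₁W, ← hWw₀ hs, sub_mul, mul_right_comm _ x₀]
    rw [integral_sub ((integrable_mul_comp_sub ha₁i hWm hWM s).mul_const x₀)
      (integrable_mul_comp_sub hgi hWm hWM s), MeasureTheory.integral_mul_const]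
    ring
  rw [integral_congr hsplit, integral_add ((hPi.const_mul x₀).add hQi) hH,
    integral_add (hPi.const_mul x₀) hQi, intervalIntegral.integral_const_mul, hP, hQ, ← hc]
  ring

/-- The affine function `v(t,x) = ⟨w(t),x⟩ + c(t)` is an integral solution of the HJB
equation for the linear-quadratic advertising example: with `w₀` solving the backward
delay equation with terminal value `γ`, `w₁(t,ξ) = w₀(t−ξ)·𝟙_{[0,T]}(t−ξ)`,
`b(s) = b₀w₀(s) + ∫_{−r}^0 b₁(ξ)w₁(s,ξ)dξ`, `c(t) = ∫_t^T (max(b(s),0))²/(4β) ds`,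
and `x = (x₀, x₁)` with `x₁(ξ) = ∫_{−r}^ξ g` (so `x ∈ D(A)`), one has
`φ(x) − v(t,x) + ∫_t^T [⟨Ax, v_x(s,x)⟩ + H₀(v_x(s,x))] ds = 0`. -/
theorem affine_integral_solution_of_HJB (T r a₀ b₀ γ β : ℝ)
    (hT : 0 < T) (hr : 0 < r) (hβ : 0 < β) (a₁ b₁ : ℝ → ℝ)
    (ha₁ : MemLp a₁ 2 (volume.restrict (Set.Icc (-r) 0)))
    (hb₁ : MemLp b₁ 2 (volume.restrict (Set.Icc (-r) 0)))
    (w₀ : ℝ → ℝ) (hw₀c : ContinuousOn w₀ (Set.Icc 0 T))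
    (hw₀ : ∀ t ∈ Set.Icc (0 : ℝ) T,
      w₀ t = γ + ∫ s in t..T, (a₀ * w₀ s +
        ∫ ξ in Set.Icc (-r) 0, a₁ ξ * w₀ (s - ξ) * (if s - ξ ≤ T then (1 : ℝ) else 0)))
    (w₁ : ℝ → ℝ → ℝ)
    (hw₁ : ∀ t ξ, w₁ t ξ = w₀ (t - ξ) * (if t - ξ ∈ Set.Icc 0 T then (1 : ℝ) else 0))
    (b : ℝ → ℝ)
    (hb : ∀ s, b s = b₀ * w₀ s + ∫ ξ in Set.Icc (-r) 0, b₁ ξ * w₁ s ξ)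
    (c : ℝ → ℝ)
    (hc : ∀ t, c t = ∫ s in t..T, (max (b s) 0) ^ 2 / (4 * β))
    (t : ℝ) (ht : t ∈ Set.Icc (0 : ℝ) T) (x₀ : ℝ) (g : ℝ → ℝ)
    (hg : MemLp g 2 (volume.restrict (Set.Icc (-r) 0)))
    (x₁ : ℝ → ℝ) (hx₁ : ∀ ξ, x₁ ξ = ∫ ζ in Set.Icc (-r) ξ, g ζ) :
    γ * x₀ - (w₀ t * x₀ + (∫ ξ in Set.Icc (-r) 0, w₁ t ξ * x₁ ξ) + c t) +
      ∫ s in t..T, ((a₀ * x₀ + x₁ 0) * w₀ s +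
        (∫ ξ in Set.Icc (-r) 0, (a₁ ξ * x₀ - g ξ) * w₁ s ξ) +
        (max (b s) 0) ^ 2 / (4 * β)) = 0 :=
  affine_integral_solution_of_HJB_general T r a₀ b₀ γ β a₁ b₁ ha₁ hb₁ w₀ hw₀c hw₀ w₁ hw₁ b hb c hc t
    ht x₀ g hg x₁ hx₁
end

section
/- Duality between A and A*: let r > 0, a₀ ∈ ℝ, a₁ ∈ L²([−r,0];ℝ). Let x = (x₀,x₁) with x₁(ξ) = ∫_{−r}^{ξ} g(ζ)dζ for some g ∈ L²([−r,0];ℝ) (so x₁ ∈ W^{1,2} with x₁(−r)=0), and let y = (y₀,y₁) with y₁ ∈ W^{1,2}([−r,0];ℝ), y₁′ = h ∈ L²([−r,0];ℝ), and y₁(0) = y₀. Then ⟨Ax, y⟩ = ⟨x, A*y⟩, i.e. (a₀x₀ + x₁(0))·y₀ + ∫_{−r}^0 (a₁(ξ)x₀ − g(ξ))·y₁(ξ)dξ = x₀·( a₀y₀ + ∫_{−r}^0 a₁(ξ)y₁(ξ)dξ ) + ∫_{−r}^0 x₁(ξ)·h(ξ)dξ. -/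
open MeasureTheory Set

/-!
After cancelling `a₀x₀y₀` and `x₀ ∫ a₁y₁`, the identity is `∫ g y₁ + ∫ x₁ h = x₁(0) y₁(0)`,
i.e. integration by parts for the absolutely continuous functions `x₁` and `y₁` on `[−r, 0]`,
the boundary term at `−r` vanishing because `x₁(−r) = 0`. The derivatives of the primitives `x₁`
and `y₁ − y₁(−r)` are `g` and `h` almost everywhere by Lebesgue's differentiation theorem.
-/

theorem intervalIntegral.integral_mul_primitive_add_primitive_mul {g h : ℝ → ℝ} {a b : ℝ}
    (hg : IntervalIntegrable g volume a b) (hh : IntervalIntegrable h volume a b) :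
    ∫ x in a..b, g x * (∫ t in a..x, h t) + (∫ t in a..x, g t) * h x
      = (∫ x in a..b, g x) * ∫ x in a..b, h x := by
  have hG := hg.absolutelyContinuousOnInterval_intervalIntegral (c := a) left_mem_uIcc
  have hH := hh.absolutelyContinuousOnInterval_intervalIntegral (c := a) left_mem_uIcc
  have hparts := hG.integral_deriv_mul_eq_sub hH
  rw [intervalIntegral.integral_same, zero_mul, sub_zero] at hparts
  rw [← hparts]
  apply intervalIntegral.integral_congr_ae
  filter_upwards [hg.ae_hasDerivAt_integral, hh.ae_hasDerivAt_integral] with x hgx hhx hx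
  have hx' := uIoc_subset_uIcc hx
  rw [(hgx hx' a left_mem_uIcc).deriv, (hhx hx' a left_mem_uIcc).deriv]

theorem setIntegral_Icc_eq_intervalIntegral {f : ℝ → ℝ} {a b : ℝ} (hab : a ≤ b) :
    ∫ x in Icc a b, f x = ∫ x in a..b, f x := by
  rw [integral_Icc_eq_integral_Ioc, intervalIntegral.integral_of_le hab]

theorem MeasureTheory.IntegrableOn.continuousOn_of_eq_add_primitive {h v : ℝ → ℝ} {a b : ℝ}
    (hh : IntegrableOn h (Icc a b)) (hv : ∀ x ∈ Icc a b, v x = v a + ∫ t in Icc a x, h t) :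
    ContinuousOn v (Icc a b) :=
  (continuousOn_const.add (intervalIntegral.continuousOn_primitive_Icc hh)).congr hv

theorem setIntegral_mul_add_primitive_mul {g h v : ℝ → ℝ} {a b : ℝ}
    (hg : IntegrableOn g (Icc a b)) (hh : IntegrableOn h (Icc a b))
    (hv : ∀ x ∈ Icc a b, v x = v a + ∫ t in Icc a x, h t) :
    (∫ x in Icc a b, g x * v x) + ∫ x in Icc a b, (∫ t in Icc a x, g t) * h x
      = (∫ x in Icc a b, g x) * v b := by
  rcases lt_or_ge b a with hba | hab
  · simp [Icc_eq_empty_of_lt hba]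
  have hIcc : ∀ f : ℝ → ℝ, ∀ x ∈ uIcc a b, ∫ t in Icc a x, f t = ∫ t in a..x, f t :=
    fun f x hx ↦ setIntegral_Icc_eq_intervalIntegral (uIcc_of_le hab ▸ hx).1
  have hgi := (intervalIntegrable_iff_integrableOn_Icc_of_le hab).2 hg
  have hhi := (intervalIntegrable_iff_integrableOn_Icc_of_le hab).2 hh
  have hgH := hgi.mul_continuousOn
    (intervalIntegral.continuousOn_primitive_interval' hhi left_mem_uIcc)
  have hGh := hhi.continuousOn_mul
    (intervalIntegral.continuousOn_primitive_interval' hgi left_mem_uIcc)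
  calc (∫ x in Icc a b, g x * v x) + ∫ x in Icc a b, (∫ t in Icc a x, g t) * h x
      = (∫ x in a..b, v a * g x + g x * ∫ t in a..x, h t)
          + ∫ x in a..b, (∫ t in a..x, g t) * h x := by
        rw [setIntegral_Icc_eq_intervalIntegral hab, setIntegral_Icc_eq_intervalIntegral hab]
        congr 1 <;> refine intervalIntegral.integral_congr fun x hx ↦ ?_
        · simp only [hv x (uIcc_of_le hab ▸ hx), hIcc h x hx]
          ring
        · simp only [hIcc g x hx]
    _ = v a * (∫ x in a..b, g x)
          + ∫ x in a..b, g x * (∫ t in a..x, h t) + (∫ t in a..x, g t) * h x := by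
        rw [intervalIntegral.integral_add (hgi.const_mul _) hgH,
          intervalIntegral.integral_add hgH hGh, intervalIntegral.integral_const_mul, add_assoc]
    _ = (∫ x in Icc a b, g x) * v b := by
        rw [intervalIntegral.integral_mul_primitive_add_primitive_mul hgi hhi,
          hv b ⟨hab, le_rfl⟩, hIcc h b right_mem_uIcc, setIntegral_Icc_eq_intervalIntegral hab]
        ring

theorem duality_A_Astar_general (r a₀ : ℝ) (a₁ g h : ℝ → ℝ)
    (ha : MemLp a₁ 2 (volume.restrict (Set.Icc (-r) 0)))
    (hg : MemLp g 2 (volume.restrict (Set.Icc (-r) 0)))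
    (hh : MemLp h 2 (volume.restrict (Set.Icc (-r) 0)))
    (x₀ y₀ : ℝ) (x₁ y₁ : ℝ → ℝ)
    (hx₁ : ∀ ξ, x₁ ξ = ∫ ζ in Set.Icc (-r) ξ, g ζ)
    (hy₁ : ∀ ξ ∈ Set.Icc (-r) (0 : ℝ), y₁ ξ = y₁ (-r) + ∫ ζ in Set.Icc (-r) ξ, h ζ)
    (hy₀ : y₁ 0 = y₀) :
    (a₀ * x₀ + x₁ 0) * y₀ + (∫ ξ in Set.Icc (-r) 0, (a₁ ξ * x₀ - g ξ) * y₁ ξ)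
      = x₀ * (a₀ * y₀ + ∫ ξ in Set.Icc (-r) 0, a₁ ξ * y₁ ξ) +
        ∫ ξ in Set.Icc (-r) 0, x₁ ξ * h ξ := by
  have hgi : IntegrableOn g (Icc (-r) 0) := hg.integrable one_le_two
  have hhi : IntegrableOn h (Icc (-r) 0) := hh.integrable one_le_two
  have hai : IntegrableOn a₁ (Icc (-r) 0) := ha.integrable one_le_two
  have hy₁c := hhi.continuousOn_of_eq_add_primitive hy₁
  have hparts := setIntegral_mul_add_primitive_mul hgi hhi hy₁
  simp_rw [← hx₁] at hparts
  have hsplit : ∫ ξ in Icc (-r) 0, (a₁ ξ * x₀ - g ξ) * y₁ ξ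
      = (∫ ξ in Icc (-r) 0, a₁ ξ * y₁ ξ) * x₀ - ∫ ξ in Icc (-r) 0, g ξ * y₁ ξ := by
    simp_rw [sub_mul, mul_right_comm (a₁ _) x₀]
    rw [integral_sub ((hai.mul_continuousOn hy₁c isCompact_Icc).mul_const x₀)
      (hgi.mul_continuousOn hy₁c isCompact_Icc), integral_mul_const]
  rw [hsplit, ← hy₀]
  linear_combination -hparts

/-- Duality between `A` and `A*`: for `x = (x₀,x₁) ∈ D(A)` (i.e. `x₁(ξ) = ∫_{−r}^ξ g`
with `g ∈ L²`, so `x₁ ∈ W^{1,2}` and `x₁(−r)=0`) and `y = (y₀,y₁) ∈ D(A*)`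
(i.e. `y₁ ∈ W^{1,2}` with `y₁′ = h ∈ L²` and `y₁(0) = y₀`), one has `⟨Ax,y⟩ = ⟨x,A*y⟩`:
`(a₀x₀ + x₁(0))·y₀ + ∫_{−r}^0 (a₁(ξ)x₀ − g(ξ))·y₁(ξ)dξ
  = x₀·(a₀y₀ + ∫_{−r}^0 a₁(ξ)y₁(ξ)dξ) + ∫_{−r}^0 x₁(ξ)·h(ξ)dξ`. -/
theorem duality_A_Astar (r a₀ : ℝ) (hr : 0 < r) (a₁ g h : ℝ → ℝ)
    (ha : MemLp a₁ 2 (volume.restrict (Set.Icc (-r) 0)))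
    (hg : MemLp g 2 (volume.restrict (Set.Icc (-r) 0)))
    (hh : MemLp h 2 (volume.restrict (Set.Icc (-r) 0)))
    (x₀ y₀ : ℝ) (x₁ y₁ : ℝ → ℝ)
    (hx₁ : ∀ ξ, x₁ ξ = ∫ ζ in Set.Icc (-r) ξ, g ζ)
    (hy₁ : ∀ ξ ∈ Set.Icc (-r) (0 : ℝ), y₁ ξ = y₁ (-r) + ∫ ζ in Set.Icc (-r) ξ, h ζ)
    (hy₀ : y₁ 0 = y₀) :
    (a₀ * x₀ + x₁ 0) * y₀ + (∫ ξ in Set.Icc (-r) 0, (a₁ ξ * x₀ - g ξ) * y₁ ξ)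
      = x₀ * (a₀ * y₀ + ∫ ξ in Set.Icc (-r) 0, a₁ ξ * y₁ ξ) +
        ∫ ξ in Set.Icc (-r) 0, x₁ ξ * h ξ :=
  duality_A_Astar_general r a₀ a₁ g h ha hg hh x₀ y₀ x₁ y₁ hx₁ hy₁ hy₀
end
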